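/- arXiv:2103.10353 — 3 statements merged into one kernel-verified Lean document; each statement's English description precedes it below -/
import Mathlib

section
/- Let I ⊆ ℝ be an interval, λ = (λ₁, λ₂): I → ℝ² continuously differentiable with λ′(t) ≠ (0,0) for all t, α: I → ℝ³ twice continuously differentiable, β: I → ℝ³ continuously differentiable, such that for every t ∈ I the vectors α′(t) and β(t) are lightlike, Lorentz-orthogonal, and (α′(t), β(t)) ≠ (0, 0). Let G: I → ℂ be given by G(t) = (α₁′(t) + iα₂′(t))/α₃′(t) wherever α′(t) ≠ 0 and G(t) = (β₁(t) + iβ₂(t))/β₃(t) wherever β₃(t) ≠ 0 (these expressions agree where both apply). Then the following are equivalent: (I) for all t ∈ I, λ₁′(t)·α′(t) + λ₂′(t)·β(t) = 0 in ℝ³ and G′(t) ≠ 0; (II) for all t ∈ I, α₃′(t)λ₁′(t) + β₃(t)λ₂′(t) = 0, and β₁(t)β₂′(t) − β₂(t)β₁′(t) ≠ 0 whenever β₃(t) ≠ 0, and α₁′(t)α₂″(t) − α₂′(t)α₁″(t) ≠ 0 whenever α₃′(t) ≠ 0. -/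
/-!
The equation `α₃'λ₁' + β₃λ₂' = 0` is the third coordinate of `λ₁'α' + λ₂'β = 0`, and it forces the
other two: Lorentz-orthogonal lightlike vectors are proportional, and `α'`, `β` are not both zero.
Near a point where the third coordinate of a lightlike curve `f` does not vanish, `G` is its
projection `(f₀ + i f₁) / f₂`, whose derivative has numerator `N = (f₀' + i f₁') f₂ - (f₀ + i f₁) f₂'`.
Differentiating `f₀² + f₁² = f₂²` gives `f₀f₀' + f₁f₁' = f₂f₂'`, and with these two relations
`|N|² = (f₀f₁' - f₁f₀')²`. Hence `G' ≠ 0` is the nonvanishing of that determinant, for `f = β`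
or for `f = α'`, and at every point one of `β₃`, `α₃'` is nonzero.
-/

open Complex

theorem Set.OrdConnected.uniqueDiffOn {s : Set ℝ} (hs : s.OrdConnected) (hs' : s.Nontrivial) :
    UniqueDiffOn ℝ s := by
  intro t ht
  obtain ⟨c, hc, hct⟩ := hs'.exists_ne t
  exact (uniqueDiffOn_uIcc hct.symm t Set.left_mem_uIcc).mono (hs.uIcc_subset ht hc)

section Lightlike

variable {a b : Fin 3 → ℝ}

theorem eq_zero_of_lightlike_of_apply_two_eq_zero (ha : a 0 ^ 2 + a 1 ^ 2 = a 2 ^ 2)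
    (h2 : a 2 = 0) : a = 0 := by
  have h0 : a 0 = 0 := by nlinarith [sq_nonneg (a 0), sq_nonneg (a 1)]
  have h1 : a 1 = 0 := by nlinarith [sq_nonneg (a 0), sq_nonneg (a 1)]
  funext j
  fin_cases j <;> simp [h0, h1, h2]

theorem lightlike_orthogonal_proportional (ha : a 0 ^ 2 + a 1 ^ 2 = a 2 ^ 2)
    (hb : b 0 ^ 2 + b 1 ^ 2 = b 2 ^ 2) (hab : a 0 * b 0 + a 1 * b 1 = a 2 * b 2) (j : Fin 3) :
    b 2 * a j = a 2 * b j := by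
  have hsq : (b 2 * a 0 - a 2 * b 0) ^ 2 + (b 2 * a 1 - a 2 * b 1) ^ 2 = 0 := by
    linear_combination b 2 ^ 2 * ha + a 2 ^ 2 * hb - 2 * a 2 * b 2 * hab
  have h0 : b 2 * a 0 = a 2 * b 0 := by
    nlinarith [sq_nonneg (b 2 * a 0 - a 2 * b 0), sq_nonneg (b 2 * a 1 - a 2 * b 1)]
  have h1 : b 2 * a 1 = a 2 * b 1 := by
    nlinarith [sq_nonneg (b 2 * a 0 - a 2 * b 0), sq_nonneg (b 2 * a 1 - a 2 * b 1)]
  fin_cases j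
  exacts [h0, h1, mul_comm _ _]

theorem lightlike_combination_eq_zero_iff (ha : a 0 ^ 2 + a 1 ^ 2 = a 2 ^ 2)
    (hb : b 0 ^ 2 + b 1 ^ 2 = b 2 ^ 2) (hab : a 0 * b 0 + a 1 * b 1 = a 2 * b 2)
    (hne : ¬(a = 0 ∧ b = 0)) (l₁ l₂ : ℝ) :
    (∀ j, l₁ * a j + l₂ * b j = 0) ↔ a 2 * l₁ + b 2 * l₂ = 0 := by
  refine ⟨fun h => by linarith [h 2], fun h j => ?_⟩
  by_cases ha2 : a 2 = 0
  · have ha0 := eq_zero_of_lightlike_of_apply_two_eq_zero ha ha2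
    have hb2 : b 2 ≠ 0 := fun hb2 => hne ⟨ha0, eq_zero_of_lightlike_of_apply_two_eq_zero hb hb2⟩
    have hl₂ : l₂ = 0 := by simpa [ha2, hb2] using h
    simp [ha0, hl₂]
  · have hmul : a 2 * (l₁ * a j + l₂ * b j) = 0 := by
      linear_combination a j * h - l₂ * lightlike_orthogonal_proportional ha hb hab j
    exact (mul_eq_zero.mp hmul).resolve_left ha2

theorem normSq_lightlike_projection_numerator (ha : a 0 ^ 2 + a 1 ^ 2 = a 2 ^ 2)
    (hab : a 0 * b 0 + a 1 * b 1 = a 2 * b 2) :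
    normSq (((b 0 : ℂ) + I * b 1) * a 2 - (a 0 + I * a 1) * b 2) = (a 0 * b 1 - a 1 * b 0) ^ 2 := by
  simp only [normSq_apply, sub_re, sub_im, mul_re, mul_im, add_re, add_im, ofReal_re, ofReal_im,
    I_re, I_im]
  linear_combination (b 2 ^ 2 - b 0 ^ 2 - b 1 ^ 2) * ha + (a 0 * b 0 + a 1 * b 1 - a 2 * b 2) * hab

end Lightlike

section Curve

variable {s : Set ℝ} {t : ℝ} {f : ℝ → Fin 3 → ℝ} {v : Fin 3 → ℝ}

theorem lightlike_orthogonal_deriv (hs : UniqueDiffWithinAt ℝ s t) (ht : t ∈ s)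
    (hf : ∀ j, HasDerivWithinAt (fun u => f u j) (v j) s t)
    (hnull : ∀ u ∈ s, f u 0 ^ 2 + f u 1 ^ 2 = f u 2 ^ 2) :
    f t 0 * v 0 + f t 1 * v 1 = f t 2 * v 2 := by
  have hq : HasDerivWithinAt (fun u => f u 0 ^ 2 + f u 1 ^ 2 - f u 2 ^ 2)
      (2 * f t 0 * v 0 + 2 * f t 1 * v 1 - 2 * f t 2 * v 2) s t :=
    ((((hf 0).pow 2).add ((hf 1).pow 2)).sub ((hf 2).pow 2)).congr_deriv (by ring)
  have hq₀ : HasDerivWithinAt (fun u => f u 0 ^ 2 + f u 1 ^ 2 - f u 2 ^ 2) 0 s t :=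
    (hasDerivWithinAt_const t s 0).congr (fun u hu => by simp [hnull u hu])
      (by simp [hnull t ht])
  linarith [hs.eq_deriv _ hq hq₀]

theorem hasDerivWithinAt_lightlike_projection
    (hf : ∀ j, HasDerivWithinAt (fun u => f u j) (v j) s t) (h2 : f t 2 ≠ 0) :
    HasDerivWithinAt (fun u => ((f u 0 : ℂ) + I * f u 1) / f u 2)
      ((((v 0 : ℂ) + I * v 1) * f t 2 - (f t 0 + I * f t 1) * v 2) / (f t 2 : ℂ) ^ 2) s t :=
  (((hf 0).ofReal_comp).add ((hf 1).ofReal_comp.const_mul I)).div (hf 2).ofReal_comp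
    (ofReal_ne_zero.mpr h2)

theorem hasDerivWithinAt_ne_zero_iff_of_eq_lightlike_projection {G : ℝ → ℂ} {G' : ℂ}
    (hs : UniqueDiffWithinAt ℝ s t) (ht : t ∈ s)
    (hf : ∀ j, HasDerivWithinAt (fun u => f u j) (v j) s t)
    (hnull : ∀ u ∈ s, f u 0 ^ 2 + f u 1 ^ 2 = f u 2 ^ 2)
    (hG : HasDerivWithinAt G G' s t)
    (hGf : ∀ u ∈ s, f u 2 ≠ 0 → G u = ((f u 0 : ℂ) + I * f u 1) / f u 2) (h2 : f t 2 ≠ 0) :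
    G' ≠ 0 ↔ f t 0 * v 1 - f t 1 * v 0 ≠ 0 := by
  have hGf_near : G =ᶠ[nhdsWithin t s] fun u => ((f u 0 : ℂ) + I * f u 1) / f u 2 := by
    filter_upwards [self_mem_nhdsWithin, (hf 2).continuousWithinAt.eventually_ne h2]
      with u hu hu2 using hGf u hu hu2
  have hG' := (hasDerivWithinAt_lightlike_projection hf h2).congr_of_eventuallyEq hGf_near
    (hGf t ht h2)
  rw [hs.eq_deriv _ hG hG', div_ne_zero_iff, ne_eq, ← normSq_eq_zero,
    normSq_lightlike_projection_numerator (hnull t ht) (lightlike_orthogonal_deriv hs ht hf hnull)]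
  simp [h2]

end Curve

theorem stmt_6_general (I : Set ℝ) (hI : I.OrdConnected) (hInt : I.Nontrivial)
    (lam1' lam2' : ℝ → ℝ)
    (α' α'' β β' : ℝ → Fin 3 → ℝ) (G G' : ℝ → ℂ)
    (hα' : ∀ t ∈ I, ∀ j, HasDerivWithinAt (fun s => α' s j) (α'' t j) I t)
    (hβ : ∀ t ∈ I, ∀ j, HasDerivWithinAt (fun s => β s j) (β' t j) I t)
    (hnullα : ∀ t ∈ I, α' t 0 ^ 2 + α' t 1 ^ 2 = α' t 2 ^ 2)
    (hnullβ : ∀ t ∈ I, β t 0 ^ 2 + β t 1 ^ 2 = β t 2 ^ 2)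
    (horth : ∀ t ∈ I, α' t 0 * β t 0 + α' t 1 * β t 1 = α' t 2 * β t 2)
    (hne : ∀ t ∈ I, ¬ (α' t = 0 ∧ β t = 0))
    (hG : ∀ t ∈ I, HasDerivWithinAt G (G' t) I t)
    (hGα : ∀ t ∈ I, α' t ≠ 0 →
      G t = ((α' t 0 : ℂ) + Complex.I * (α' t 1 : ℂ)) / (α' t 2 : ℂ))
    (hGβ : ∀ t ∈ I, β t 2 ≠ 0 →
      G t = ((β t 0 : ℂ) + Complex.I * (β t 1 : ℂ)) / (β t 2 : ℂ)) :
    (∀ t ∈ I, (∀ j, lam1' t * α' t j + lam2' t * β t j = 0) ∧ G' t ≠ 0) ↔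
    (∀ t ∈ I, α' t 2 * lam1' t + β t 2 * lam2' t = 0 ∧
      (β t 2 ≠ 0 → β t 0 * β' t 1 - β t 1 * β' t 0 ≠ 0) ∧
      (α' t 2 ≠ 0 → α' t 0 * α'' t 1 - α' t 1 * α'' t 0 ≠ 0)) := by
  have hud := hI.uniqueDiffOn hInt
  have hGα₂ : ∀ t ∈ I, α' t 2 ≠ 0 → G t = ((α' t 0 : ℂ) + Complex.I * α' t 1) / α' t 2 :=
    fun t ht h2 => hGα t ht fun h => h2 (by simp [h])
  refine forall₂_congr fun t ht => ?_
  rw [lightlike_combination_eq_zero_iff (hnullα t ht) (hnullβ t ht) (horth t ht) (hne t ht)]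
  have hGβ' := hasDerivWithinAt_ne_zero_iff_of_eq_lightlike_projection (hud t ht) ht (hβ t ht)
    hnullβ (hG t ht) hGβ
  have hGα' := hasDerivWithinAt_ne_zero_iff_of_eq_lightlike_projection (hud t ht) ht (hα' t ht)
    hnullα (hG t ht) hGα₂
  have hsome : α' t 2 ≠ 0 ∨ β t 2 ≠ 0 := by
    by_contra! h
    exact hne t ht ⟨eq_zero_of_lightlike_of_apply_two_eq_zero (hnullα t ht) h.1,
      eq_zero_of_lightlike_of_apply_two_eq_zero (hnullβ t ht) h.2⟩
  tauto

/-- Proposition 3.1: the trace of `λ` consists only of shrinking singular points,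
i.e. `X∘λ` is constant and `G' ≠ 0` along `λ` (condition (I)), if and only if
`α₃'λ₁' + β₃λ₂' = 0` together with the nonvanishing of the determinants
`D(β₁₂, β₁₂')` (where `β₃ ≠ 0`) and `D(α₁₂', α₁₂'')` (where `α₃' ≠ 0`) (condition (II)). -/
theorem stmt_6 (I : Set ℝ) (hI : I.OrdConnected) (hInt : I.Nontrivial)
    (lam1 lam2 lam1' lam2' : ℝ → ℝ)
    (α α' α'' β β' : ℝ → Fin 3 → ℝ) (G G' : ℝ → ℂ)
    (hlam1 : ∀ t ∈ I, HasDerivWithinAt lam1 (lam1' t) I t)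
    (hlam2 : ∀ t ∈ I, HasDerivWithinAt lam2 (lam2' t) I t)
    (hlam1c : ContinuousOn lam1' I) (hlam2c : ContinuousOn lam2' I)
    (hlamne : ∀ t ∈ I, (lam1' t, lam2' t) ≠ (0, 0))
    (hα : ∀ t ∈ I, ∀ j, HasDerivWithinAt (fun s => α s j) (α' t j) I t)
    (hα' : ∀ t ∈ I, ∀ j, HasDerivWithinAt (fun s => α' s j) (α'' t j) I t)
    (hα''c : ∀ j, ContinuousOn (fun s => α'' s j) I)
    (hβ : ∀ t ∈ I, ∀ j, HasDerivWithinAt (fun s => β s j) (β' t j) I t)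
    (hβ'c : ∀ j, ContinuousOn (fun s => β' s j) I)
    (hnullα : ∀ t ∈ I, α' t 0 ^ 2 + α' t 1 ^ 2 = α' t 2 ^ 2)
    (hnullβ : ∀ t ∈ I, β t 0 ^ 2 + β t 1 ^ 2 = β t 2 ^ 2)
    (horth : ∀ t ∈ I, α' t 0 * β t 0 + α' t 1 * β t 1 = α' t 2 * β t 2)
    (hne : ∀ t ∈ I, ¬ (α' t = 0 ∧ β t = 0))
    (hG : ∀ t ∈ I, HasDerivWithinAt G (G' t) I t)
    (hGα : ∀ t ∈ I, α' t ≠ 0 →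
      G t = ((α' t 0 : ℂ) + Complex.I * (α' t 1 : ℂ)) / (α' t 2 : ℂ))
    (hGβ : ∀ t ∈ I, β t 2 ≠ 0 →
      G t = ((β t 0 : ℂ) + Complex.I * (β t 1 : ℂ)) / (β t 2 : ℂ)) :
    (∀ t ∈ I, (∀ j, lam1' t * α' t j + lam2' t * β t j = 0) ∧ G' t ≠ 0) ↔
    (∀ t ∈ I, α' t 2 * lam1' t + β t 2 * lam2' t = 0 ∧
      (β t 2 ≠ 0 → β t 0 * β' t 1 - β t 1 * β' t 0 ≠ 0) ∧
      (α' t 2 ≠ 0 → α' t 0 * α'' t 1 - α' t 1 * α'' t 0 ≠ 0)) :=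
  stmt_6_general I hI hInt lam1' lam2' α' α'' β β' G G' hα' hβ hnullα hnullβ horth hne hG hGα hGβ
end

section
/- Fix an integer n ≥ 1 and set t_k = (2k+1)π/(2n) for k ∈ {0, 1, …, 2n−1}. Then for every k: cos(t_k)·cos(n·t_k) = 0; moreover, if n is even then cos(t_k)·sin(n·t_k) + (1/n)·sin(t_k)·cos(n·t_k) ≠ 0 for every k ∈ {0,…,2n−1}, while if n is odd this expression is nonzero exactly for k ∈ {0,…,2n−1} ∖ {(n−1)/2, (3n−1)/2}. -/
lemma aux_sin_odd_half (k : ℕ) : Real.sin ((2 * (k:ℝ) + 1) * Real.pi / 2) = (-1)^k := by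
  have h : (2 * (k:ℝ) + 1) * Real.pi / 2 = Real.pi / 2 + k * Real.pi := by ring
  rw [h, Real.sin_add_nat_mul_pi, Real.sin_pi_div_two, mul_one]

lemma aux_cos_odd_half (k : ℕ) : Real.cos ((2 * (k:ℝ) + 1) * Real.pi / 2) = 0 := by
  have h : (2 * (k:ℝ) + 1) * Real.pi / 2 = Real.pi / 2 + k * Real.pi := by ring
  rw [h, Real.cos_add_nat_mul_pi, Real.cos_pi_div_two, mul_zero]

/-- Example 3.5, location of the swallowtails: with `t_k = (2k+1)π/(2n)` for
`k = 0, …, 2n-1`, one has `cos(t_k)·cos(n t_k) = 0` for every `k`; if `n` is even then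
`cos(t_k)·sin(n t_k) + (1/n)·sin(t_k)·cos(n t_k) ≠ 0` for every `k`, while if `n` is odd
this expression is nonzero exactly for `k ∉ {(n-1)/2, (3n-1)/2}`. -/
theorem stmt_15 (n : ℕ) (hn : 1 ≤ n) :
    (∀ k : ℕ, k < 2 * n →
      Real.cos ((2 * (k : ℝ) + 1) * Real.pi / (2 * n)) *
        Real.cos ((n : ℝ) * ((2 * (k : ℝ) + 1) * Real.pi / (2 * n))) = 0) ∧
    (Even n → ∀ k : ℕ, k < 2 * n →
      Real.cos ((2 * (k : ℝ) + 1) * Real.pi / (2 * n)) *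
          Real.sin ((n : ℝ) * ((2 * (k : ℝ) + 1) * Real.pi / (2 * n)))
        + (1 / n) * Real.sin ((2 * (k : ℝ) + 1) * Real.pi / (2 * n)) *
            Real.cos ((n : ℝ) * ((2 * (k : ℝ) + 1) * Real.pi / (2 * n))) ≠ 0) ∧
    (Odd n → ∀ k : ℕ, k < 2 * n →
      (Real.cos ((2 * (k : ℝ) + 1) * Real.pi / (2 * n)) *
          Real.sin ((n : ℝ) * ((2 * (k : ℝ) + 1) * Real.pi / (2 * n)))
        + (1 / n) * Real.sin ((2 * (k : ℝ) + 1) * Real.pi / (2 * n)) *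
            Real.cos ((n : ℝ) * ((2 * (k : ℝ) + 1) * Real.pi / (2 * n))) ≠ 0
        ↔ k ≠ (n - 1) / 2 ∧ k ≠ (3 * n - 1) / 2)) := by
  have hn0 : (n:ℝ) ≠ 0 := Nat.cast_ne_zero.mpr (by omega)
  have hnt : ∀ k : ℕ, (n : ℝ) * ((2 * (k : ℝ) + 1) * Real.pi / (2 * n))
      = (2 * (k:ℝ) + 1) * Real.pi / 2 := by
    intro k; field_simp
  -- the expression simplifies to cos(t_k) * (-1)^k
  have hexpr : ∀ k : ℕ,
      Real.cos ((2 * (k : ℝ) + 1) * Real.pi / (2 * n)) *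
          Real.sin ((n : ℝ) * ((2 * (k : ℝ) + 1) * Real.pi / (2 * n)))
        + (1 / n) * Real.sin ((2 * (k : ℝ) + 1) * Real.pi / (2 * n)) *
            Real.cos ((n : ℝ) * ((2 * (k : ℝ) + 1) * Real.pi / (2 * n)))
      = Real.cos ((2 * (k : ℝ) + 1) * Real.pi / (2 * n)) * (-1)^k := by
    intro k
    rw [hnt k, aux_sin_odd_half, aux_cos_odd_half]
    ring
  -- cos(t_k) = 0 iff 2k+1 = n(2m+1) for some integer m
  have hpi := Real.pi_pos
  have hcoszero : ∀ k : ℕ, Real.cos ((2 * (k : ℝ) + 1) * Real.pi / (2 * n)) = 0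
      ↔ ∃ m : ℤ, (2 * (k:ℤ) + 1) = n * (2 * m + 1) := by
    intro k
    rw [Real.cos_eq_zero_iff]
    constructor
    · rintro ⟨m, hm⟩
      refine ⟨m, ?_⟩
      have h2 : (2 * (k:ℝ) + 1) * Real.pi = (n:ℝ) * ((2 * m + 1)) * Real.pi := by
        field_simp at hm
        nlinarith [hm]
      have h3 : (2 * (k:ℝ) + 1) = (n:ℝ) * (2 * m + 1) :=
        mul_right_cancel₀ (ne_of_gt hpi) h2
      exact_mod_cast h3
    · rintro ⟨m, hm⟩
      refine ⟨m, ?_⟩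
      have hm' : (2 * (k:ℝ) + 1) = (n:ℝ) * (2 * m + 1) := by exact_mod_cast hm
      rw [hm']
      field_simp
  refine ⟨?_, ?_, ?_⟩
  · intro k _
    rw [hnt k, aux_cos_odd_half, mul_zero]
  · -- even case
    rintro ⟨r, rfl⟩ k _
    rw [hexpr k]
    intro h
    rcases mul_eq_zero.mp h with h0 | h0
    · obtain ⟨m, hm⟩ := (hcoszero k).mp h0
      have hodd : Odd (2 * (k:ℤ) + 1) := ⟨k, by ring⟩
      rw [hm] at hodd
      have heven : Even (((r + r : ℕ)):ℤ) := by
        refine ⟨r, ?_⟩; push_cast; ring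
      exact (Int.not_odd_iff_even.mpr (heven.mul_right _)) hodd
    · exact (pow_ne_zero k (by norm_num : (-1:ℝ) ≠ 0)) h0
  · -- odd case
    intro hodd k hk
    rw [hexpr k]
    have hne : ((-1:ℝ))^k ≠ 0 := pow_ne_zero k (by norm_num)
    rw [mul_ne_zero_iff]
    obtain ⟨j, hj⟩ := hodd
    constructor
    · rintro ⟨hc, -⟩
      constructor
      · intro hkeq
        apply hc
        rw [hcoszero k]
        exact ⟨0, by omega⟩
      · intro hkeq
        apply hc
        rw [hcoszero k]
        exact ⟨1, by omega⟩
    · rintro ⟨h1, h2⟩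
      refine ⟨?_, hne⟩
      intro h0
      obtain ⟨m, hm⟩ := (hcoszero k).mp h0
      -- bounds on m
      have hk' : (2 * (k:ℤ) + 1) < 4 * n := by exact_mod_cast (by omega : 2 * k + 1 < 4 * n)
      have hnpos : (0:ℤ) < n := by exact_mod_cast (by omega : 0 < n)
      have hm0 : 0 ≤ m := by nlinarith
      have hm1 : m ≤ 1 := by nlinarith
      interval_cases m
      · exact h1 (by omega)
      · exact h2 (by omega)
end

section
/- Fix an integer n ≥ 1 and define Φₙ: ℂ∖{0} → ℂ³ by Φₙ(z) = ( (1+z²)/2, i(1−z²)/2, −z ) · wₙ(z), where wₙ(z) = 1/z² − i(zⁿ + z^{−n})/(2nz). Then for every t ∈ ℝ: Φₙ(e^{it}) = αₙ′(t) − i·βₙ(t), where αₙ′(t) = cos t·(cos t, sin t, −1) and βₙ(t) = (sin t + cos(nt)/n)·(cos t, sin t, −1). -/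
/-!
On the unit circle `z = e^{it}` we have `z⁻¹ = cos t - i sin t`, so `zⁿ + z⁻ⁿ = 2 cos (nt)` and
`z · wₙ(z) = z⁻¹ - i cos (nt) / n = cos t - i (sin t + cos (nt) / n)`. Moreover `cos² t + sin² t = 1`
shows `((1+z²)/2, i(1-z²)/2, -z) = z · (cos t, sin t, -1)`, so `Φₙ(z)` is the real vector
`(cos t, sin t, -1)` times the complex scalar `z · wₙ(z)`.
-/

open Complex

noncomputable def weierstrassWeight (n : ℕ) (z : ℂ) : ℂ :=
  1 / z ^ 2 - I * (z ^ n + z⁻¹ ^ n) / (2 * n * z)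

lemma exp_I_mul_ofReal (t : ℝ) : exp (I * t) = Real.cos t + I * Real.sin t := by
  rw [mul_comm, exp_mul_I, ← ofReal_cos, ← ofReal_sin, mul_comm I]

lemma inv_exp_I_mul_ofReal (t : ℝ) : (exp (I * t))⁻¹ = Real.cos t - I * Real.sin t := by
  rw [← exp_neg, ← mul_neg, ← ofReal_neg, exp_I_mul_ofReal, Real.cos_neg, Real.sin_neg,
    ofReal_neg, mul_neg, sub_eq_add_neg]

lemma exp_I_mul_pow_add_inv_pow (t : ℝ) (n : ℕ) :
    exp (I * t) ^ n + (exp (I * t))⁻¹ ^ n = 2 * Real.cos (n * t) := by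
  have hpow : exp (I * t) ^ n = exp (I * (n * t : ℝ)) := by
    rw [← exp_nat_mul]; push_cast; ring_nf
  rw [inv_pow, hpow, inv_exp_I_mul_ofReal, exp_I_mul_ofReal]
  ring

lemma exp_I_mul_mul_weierstrassWeight (t : ℝ) (n : ℕ) :
    exp (I * t) * weierstrassWeight n (exp (I * t))
      = Real.cos t - I * (Real.sin t + Real.cos (n * t) / n) := by
  have hunit : exp (I * t) * (exp (I * t))⁻¹ = 1 := mul_inv_cancel₀ (exp_ne_zero _)
  rw [weierstrassWeight, exp_I_mul_pow_add_inv_pow]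
  linear_combination ((exp (I * t))⁻¹ - I * Real.cos (n * t) / n) * hunit
    + inv_exp_I_mul_ofReal t

lemma null_frame_exp_I_mul (t : ℝ) (j : Fin 3) :
    ![(1 + exp (I * t) ^ 2) / 2, I * (1 - exp (I * t) ^ 2) / 2, -exp (I * t)] j
      = exp (I * t) * (![Real.cos t, Real.sin t, -1] j : ℝ) := by
  have hpyth : (Real.cos t : ℂ) ^ 2 + (Real.sin t : ℂ) ^ 2 = 1 := by
    exact_mod_cast Real.cos_sq_add_sin_sq t
  rw [exp_I_mul_ofReal]
  fin_cases j
  · simp only [Fin.zero_eta, Matrix.cons_val_zero]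
    linear_combination (-1 / 2 : ℂ) * hpyth + (Real.sin t : ℂ) ^ 2 / 2 * I_sq
  · simp only [Fin.mk_one, Matrix.cons_val_one, Matrix.cons_val_zero]
    linear_combination (-I / 2) * hpyth
      - ((Real.cos t : ℂ) * Real.sin t + I * (Real.sin t : ℂ) ^ 2 / 2) * I_sq
  · simp

theorem stmt_18_general (n : ℕ) (Φn : ℂ → Fin 3 → ℂ) (wn : ℂ → ℂ)
    (hw : ∀ z : ℂ, z ≠ 0 →
      wn z = 1 / z ^ 2 - Complex.I * (z ^ n + (z⁻¹) ^ n) / (2 * n * z))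
    (hΦ : ∀ z : ℂ, z ≠ 0 →
      Φn z = fun j => ![(1 + z ^ 2) / 2, Complex.I * (1 - z ^ 2) / 2, -z] j * wn z) :
    ∀ t : ℝ, ∀ j : Fin 3,
      Φn (Complex.exp (Complex.I * t)) j
        = ((Real.cos t * ![Real.cos t, Real.sin t, -1] j : ℝ) : ℂ)
          - Complex.I *
            (((Real.sin t + Real.cos ((n : ℝ) * t) / n) *
              ![Real.cos t, Real.sin t, -1] j : ℝ) : ℂ) := by
  intro t j
  have hz : exp (I * t) ≠ 0 := exp_ne_zero _
  have hweight : wn (exp (I * t)) = weierstrassWeight n (exp (I * t)) := hw _ hz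
  simp only [hΦ _ hz]
  rw [null_frame_exp_I_mul, hweight, mul_right_comm,
    exp_I_mul_mul_weierstrassWeight]
  push_cast
  ring

/-- The Weierstrass form `Φₙ(z) = ((1+z²)/2, i(1-z²)/2, -z)·wₙ(z)` with
`wₙ(z) = 1/z² - i(zⁿ + z^{-n})/(2nz)` extends the boundary data
`αₙ'(t) - i·βₙ(t)` of the perturbed singular Björling problem on the unit circle. -/
theorem stmt_18 (n : ℕ) (hn : 1 ≤ n) (Φn : ℂ → Fin 3 → ℂ) (wn : ℂ → ℂ)
    (hw : ∀ z : ℂ, z ≠ 0 →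
      wn z = 1 / z ^ 2 - Complex.I * (z ^ n + (z⁻¹) ^ n) / (2 * n * z))
    (hΦ : ∀ z : ℂ, z ≠ 0 →
      Φn z = fun j => ![(1 + z ^ 2) / 2, Complex.I * (1 - z ^ 2) / 2, -z] j * wn z) :
    ∀ t : ℝ, ∀ j : Fin 3,
      Φn (Complex.exp (Complex.I * t)) j
        = ((Real.cos t * ![Real.cos t, Real.sin t, -1] j : ℝ) : ℂ)
          - Complex.I *
            (((Real.sin t + Real.cos ((n : ℝ) * t) / n) *
              ![Real.cos t, Real.sin t, -1] j : ℝ) : ℂ) :=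
  stmt_18_general n Φn wn hw hΦ
end
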